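/- arXiv:1903.10479 — 5 statements merged into one kernel-verified Lean document; each statement's English description precedes it below -/
import Mathlib

section
/- For any finitely generated subgroup G of the additive group of a finite-dimensional real vector space V, the intersection G ∩ V' with any real vector subspace V' of V is a direct-summand subgroup of G. -/
/-!
`G ∩ V'` is the kernel of the map `G → V ⧸ V'`, whose target is a real vector space and hence
torsion-free as an abelian group. So `G ⧸ (G ∩ V')` is a finitely generated torsion-free abelian
group, i.e. free, hence projective, and a section of the quotient map splits off a complement.
-/

open LinearMap Module

theorem Submodule.exists_isCompl_of_projective_quotient {R M : Type*} [Ring R] [AddCommGroup M]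
    [Module R M] (N : Submodule R M) [Projective R (M ⧸ N)] : ∃ P : Submodule R M, IsCompl N P := by
  obtain ⟨s, hs⟩ := projective_lifting_property N.mkQ LinearMap.id N.mkQ_surjective
  have hidem : IsIdempotentElem (s ∘ₗ N.mkQ) := by
    ext x
    exact congr_arg s (DFunLike.congr_fun hs (N.mkQ x))
  have hker : ker (s ∘ₗ N.mkQ) = N := by
    rw [ker_comp_of_ker_eq_bot _ (ker_eq_bot_of_inverse hs), Submodule.ker_mkQ]
  exact ⟨_, hker ▸ hidem.isCompl.symm⟩

theorem LinearMap.exists_isCompl_ker {R M N : Type*} [CommRing R] [IsDomain R]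
    [IsPrincipalIdealRing R] [AddCommGroup M] [Module R M] [Module.Finite R M] [AddCommGroup N]
    [Module R N] [IsTorsionFree R N] (f : M →ₗ[R] N) : ∃ P : Submodule R M, IsCompl (ker f) P := by
  have : IsTorsionFree R (M ⧸ ker f) :=
    (ker_eq_bot.mp ((ker f).ker_liftQ_eq_bot' f rfl)).moduleIsTorsionFree _ (map_smul _)
  exact (ker f).exists_isCompl_of_projective_quotient

theorem stmt1_general {V : Type*} [AddCommGroup V] [Module ℝ V]
    (G : AddSubgroup V) (hG : G.FG) (V' : Submodule ℝ V) :
    ∃ H : AddSubgroup G, IsCompl (V'.toAddSubgroup.comap G.subtype) H := by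
  have : Module.Finite ℤ G :=
    Module.Finite.iff_addGroup_fg.mpr ((AddGroup.fg_iff_addSubgroup_fg G).mpr hG)
  have : IsAddTorsionFree (V ⧸ V') := .of_isTorsionFree ℝ _
  let f : G →ₗ[ℤ] V ⧸ V' := V'.mkQ.toAddMonoidHom.toIntLinearMap ∘ₗ G.subtype.toIntLinearMap
  have hker : ker f = AddSubgroup.toIntSubmodule (V'.toAddSubgroup.comap G.subtype) := by
    ext x; exact Submodule.Quotient.mk_eq_zero V'
  obtain ⟨P, hP⟩ := f.exists_isCompl_ker
  exact ⟨P.toAddSubgroup, AddSubgroup.toIntSubmodule.symm.isCompl (hker ▸ hP)⟩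

theorem stmt1 {V : Type*} [AddCommGroup V] [Module ℝ V] [FiniteDimensional ℝ V]
    (G : AddSubgroup V) (hG : G.FG) (V' : Submodule ℝ V) :
    ∃ H : AddSubgroup G, IsCompl (V'.toAddSubgroup.comap G.subtype) H :=
  stmt1_general G hG V'
end

section
/- Let L be a lattice in a finite-dimensional real vector space V (a subgroup generated by an ℝ-basis of V) and let V' be a vector subspace of V. Then the quotient torus V/L contains the image of V' as a compact subset if and only if V' is spanned by L ∩ V'. -/
/-!
If `V'` is spanned by `L ∩ V'`, then `L ∩ V'` is a full lattice in `V'`; the map `V' → V ⧸ L`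
is periodic for it, so its image is already the image of a compact fundamental parallelepiped.
Conversely, a linear form `f` on `V` vanishing on `L ∩ V'` is constant on the fibres of
`V' → V ⧸ L`, and by the open mapping theorem for σ-compact groups it descends continuously to
the compact image of `V'`. Hence `f '' V'` is a compact subspace of `ℝ`, i.e. `0`, and `V'` lies
in the span of `L ∩ V'` by duality.
-/

open Set Submodule Topology

theorem AddMonoidHom.isCompact_range_of_factorsThrough {G H X : Type*} [AddGroup G]
    [TopologicalSpace G] [IsTopologicalAddGroup G] [SigmaCompactSpace G] [AddGroup H]
    [TopologicalSpace H] [IsTopologicalAddGroup H] [T2Space H] [TopologicalSpace X]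
    {φ : G →+ H} (hφ : Continuous φ) (hφc : IsCompact (Set.range φ)) {g : G → X}
    (hg : Continuous g) (hgφ : Function.FactorsThrough g φ) : IsCompact (Set.range g) := by
  have : CompactSpace φ.range := isCompact_iff_compactSpace.mp (by simpa using hφc)
  let q : C(G, φ.range) := ⟨φ.rangeRestrict, hφ.subtype_mk _⟩
  have hsurj : Function.Surjective q := φ.rangeRestrict_surjective
  have hopen : IsOpenMap q := φ.rangeRestrict.isOpenMap_of_sigmaCompact hsurj q.continuous
  have hquot : IsQuotientMap q := hopen.isQuotientMap q.continuous hsurj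
  have hgq : Function.FactorsThrough g q := fun _ _ hab ↦ hgφ (congrArg Subtype.val hab :)
  rw [← ContinuousMap.coe_mk g hg, ← hquot.lift_comp ⟨g, hg⟩ hgq, ContinuousMap.coe_comp,
    hsurj.range_comp]
  exact isCompact_range (map_continuous _)

theorem Submodule.map_eq_bot_of_isCompact {𝕜 E : Type*} [NontriviallyNormedField 𝕜]
    [AddCommGroup E] [Module 𝕜 E] (p : Submodule 𝕜 E) (f : E →ₗ[𝕜] 𝕜)
    (hf : IsCompact (f '' p)) : p.map f = ⊥ := by
  refine (eq_bot_or_eq_top (p.map f)).resolve_right fun htop ↦ noncompact_univ 𝕜 ?_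
  rwa [← Submodule.map_coe, htop, Submodule.top_coe] at hf

section

variable {V : Type*} [NormedAddCommGroup V] [NormedSpace ℝ V] [FiniteDimensional ℝ V]
  {L : AddSubgroup V} {V' : Submodule ℝ V}

theorem Submodule.eq_span_inter_of_isCompact_image_mk [IsClosed (L : Set V)]
    (hV' : IsCompact ((QuotientAddGroup.mk : V → V ⧸ L) '' V')) :
    V' = span ℝ ((L : Set V) ∩ V') := by
  refine le_antisymm ?_ (span_le.mpr inter_subset_right)
  rw [← Subspace.dualAnnihilator_le_dualAnnihilator_iff]
  intro f hf
  rw [mem_dualAnnihilator] at hf ⊢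
  let φ : V' →+ V ⧸ L := (QuotientAddGroup.mk' L).comp V'.subtype.toAddMonoidHom
  have hfφ : Function.FactorsThrough (f ∘ V'.subtype) φ := fun x y hxy ↦ by
    have hL : -(x : V) + y ∈ L := QuotientAddGroup.eq.mp hxy
    have : f (-(x : V) + y) = 0 := hf _ (subset_span ⟨hL, (-x + y).2⟩)
    simp only [Function.comp_apply, coe_subtype]
    rw [map_add, map_neg] at this
    linarith
  have hφ : Set.range φ = QuotientAddGroup.mk '' V' := by
    simp [φ, Set.range_comp]
  have hcompact := φ.isCompact_range_of_factorsThrough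
    (continuous_quotient_mk'.comp continuous_subtype_val) (hφ ▸ hV')
    (f.continuous_of_finiteDimensional.comp continuous_subtype_val) hfφ
  rw [Set.range_comp, Subtype.range_coe] at hcompact
  intro x hx
  exact (mem_bot ℝ).mp (V'.map_eq_bot_of_isCompact f hcompact ▸ mem_map_of_mem hx)

theorem Submodule.isCompact_image_mk_of_eq_span [DiscreteTopology L]
    (hV' : V' = span ℝ ((L : Set V) ∩ V')) :
    IsCompact ((QuotientAddGroup.mk : V → V ⧸ L) '' V') := by
  let Λ := ZLattice.comap ℝ L.toIntSubmodule V'.subtype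
  have : DiscreteTopology L.toIntSubmodule := ‹DiscreteTopology L›
  have : DiscreteTopology Λ := ZLattice.comap_discreteTopology ℝ _
    V'.subtype.continuous_of_finiteDimensional V'.injective_subtype
  have hΛ : V'.subtype '' Λ = (L : Set V) ∩ V' := by
    ext x
    exact ⟨fun ⟨y, hy, hyx⟩ ↦ hyx ▸ ⟨hy, y.2⟩, fun ⟨hxL, hxV⟩ ↦ ⟨⟨x, hxV⟩, hxL, rfl⟩⟩
  have : IsZLattice ℝ Λ := ⟨by
    rw [← (map_injective_of_injective V'.injective_subtype).eq_iff, map_span, hΛ, map_top,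
      range_subtype, ← hV']⟩
  have := IsZLattice.isCompact_range_of_periodic Λ (QuotientAddGroup.mk ∘ V'.subtype)
    (continuous_quotient_mk'.comp continuous_subtype_val) fun z w hw ↦ by
      have hwL : (w : V) ∈ L := hw
      simpa [QuotientAddGroup.eq] using hwL
  rwa [Set.range_comp, coe_subtype, Subtype.range_coe] at this

theorem Submodule.isCompact_image_mk_iff_eq_span [DiscreteTopology L] :
    IsCompact ((QuotientAddGroup.mk : V → V ⧸ L) '' V') ↔ V' = span ℝ ((L : Set V) ∩ V') :=
  have : IsClosed (L : Set V) := L.isClosed_of_discrete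
  ⟨eq_span_inter_of_isCompact_image_mk, isCompact_image_mk_of_eq_span⟩

end

theorem stmt5 {V : Type*} [NormedAddCommGroup V] [NormedSpace ℝ V] [FiniteDimensional ℝ V]
    (L : AddSubgroup V)
    (hL : ∃ b : Module.Basis (Fin (Module.finrank ℝ V)) ℝ V,
      L = AddSubgroup.closure (Set.range ⇑b))
    (V' : Submodule ℝ V) :
    IsCompact ((QuotientAddGroup.mk : V → V ⧸ L) '' (V' : Set V)) ↔
      V' = Submodule.span ℝ ((L : Set V) ∩ (V' : Set V)) := by
  obtain ⟨b, rfl⟩ := hL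
  have : DiscreteTopology (AddSubgroup.closure (Set.range b)) := by
    rw [← span_int_eq_addSubgroupClosure]
    exact inferInstanceAs (DiscreteTopology (span ℤ (Set.range b)))
  exact isCompact_image_mk_iff_eq_span
end

section
/- Let L be a lattice in a finite-dimensional real vector space V, let H be a finite group of linear automorphisms of V preserving L, and let V' be an H-invariant L-subspace of V. Then there exists an H-invariant L-subspace V'' of V such that V = V' ⊕ V''. -/
/-!
The ℚ-span `ℚL` of `L` is a ℚ-form of `V` stable under `H`, and `V'` is the ℝ-span of its rational
points `V' ∩ ℚL`. Maschke's theorem over ℚ gives an `H`-invariant ℚ-complement `W''` of these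
points inside `ℚL`, and `V'' = ℝW''` works: a subspace spanned by rational vectors is spanned by
lattice vectors after clearing denominators, and ℚ-complements inside `ℚL` stay complements over ℝ,
because a ℚ-linear projection of `ℚL` extends ℝ-linearly along a basis of `L`.
-/

open Submodule

section RationalPoints

variable {V : Type*} [AddCommGroup V] [Module ℚ V] (L : AddSubgroup V)

theorem exists_nsmul_mem_of_mem_span_rat {x : V} (hx : x ∈ span ℚ (L : Set V)) :
    ∃ n : ℕ, 0 < n ∧ n • x ∈ L := by
  induction hx using span_induction with
  | mem x hx => exact ⟨1, one_pos, by simpa using hx⟩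
  | zero => exact ⟨1, one_pos, by simp⟩
  | add x y _ _ hx hy =>
    obtain ⟨m, hm, hmx⟩ := hx
    obtain ⟨n, hn, hny⟩ := hy
    refine ⟨m * n, Nat.mul_pos hm hn, ?_⟩
    rw [smul_add, mul_comm m n, mul_smul, mul_comm n m, mul_smul]
    exact L.add_mem (L.nsmul_mem hmx n) (L.nsmul_mem hny m)
  | smul q x _ hx =>
    obtain ⟨n, hn, hnx⟩ := hx
    refine ⟨q.den * n, Nat.mul_pos q.den_pos hn, ?_⟩
    have hq : (q.den * n : ℕ) • q • x = q.num • n • x := by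
      rw [← Nat.cast_smul_eq_nsmul ℚ, ← Nat.cast_smul_eq_nsmul ℚ n, ← Int.cast_smul_eq_zsmul ℚ,
        smul_smul, smul_smul, Nat.cast_mul, mul_comm (q.den : ℚ), mul_assoc, Rat.den_mul_eq_num,
        mul_comm]
    rw [hq]
    exact L.zsmul_mem hnx _

variable [Module ℝ V]

theorem span_inter_span_eq_of_le_span_rat {W : Submodule ℚ V} (hW : W ≤ span ℚ (L : Set V)) :
    span ℝ ((L : Set V) ∩ span ℝ (W : Set V)) = span ℝ (W : Set V) := by
  refine le_antisymm (span_le.2 Set.inter_subset_right) (span_le.2 fun w hw => ?_)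
  obtain ⟨n, hn, hnw⟩ := exists_nsmul_mem_of_mem_span_rat L (hW hw)
  have hnw' : (n : ℝ) • w ∈ span ℝ ((L : Set V) ∩ span ℝ (W : Set V)) := by
    rw [Nat.cast_smul_eq_nsmul]
    exact subset_span ⟨hnw, nsmul_mem (subset_span hw) n⟩
  exact (smul_mem_iff _ (Nat.cast_ne_zero.2 hn.ne')).1 hnw'

theorem span_restrictScalars_inf_span_rat_eq [IsScalarTower ℚ ℝ V] {V' : Submodule ℝ V}
    (hV' : V' = span ℝ ((L : Set V) ∩ V')) :
    span ℝ ((V'.restrictScalars ℚ ⊓ span ℚ (L : Set V) : Submodule ℚ V) : Set V) = V' := by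
  refine le_antisymm (span_le.2 fun x hx => hx.1) ?_
  exact hV'.le.trans (span_mono fun x hx => ⟨hx.2, subset_span hx.1⟩)

end RationalPoints

theorem map_span_eq_of_mapsTo {K V : Type*} [Semiring K] [AddCommMonoid V] [Module K V]
    {H : Subgroup (V ≃ₗ[K] V)} {s : Set V} (hs : ∀ A ∈ H, Set.MapsTo A s s) :
    ∀ A ∈ H, (span K s).map A.toLinearMap = span K s := by
  have hle : ∀ A ∈ H, (span K s).map A.toLinearMap ≤ span K s := fun A hA => by
    rw [map_span]
    exact span_mono (Set.image_subset_iff.2 (hs A hA))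
  intro A hA
  refine le_antisymm (hle A hA) fun x hx => ⟨A⁻¹ x, hle A⁻¹ (inv_mem hA) ⟨x, hx, rfl⟩, ?_⟩
  simp

def Subgroup.restrictScalarsRepresentation (k : Type*) {K V : Type*} [CommSemiring k] [Semiring K]
    [AddCommMonoid V] [Module K V] [Module k V] [LinearMap.CompatibleSMul V V k K]
    (H : Subgroup (V ≃ₗ[K] V)) : Representation k H V where
  toFun A := (A : V ≃ₗ[K] V).toLinearMap.restrictScalars k
  map_one' := rfl
  map_mul' _ _ := rfl

section ExtensionOfScalars

variable {k K V ι : Type*} [Field k] [Field K] [AddCommGroup V] [Module K V] [Module k V]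
  (b : Module.Basis ι K V) {W₁ W₂ : Submodule k V}

theorem Module.Basis.disjoint_span_of_le_span [Algebra k K] [IsScalarTower k K V]
    (h₁ : W₁ ≤ span k (Set.range b)) (h₂ : W₂ ≤ span k (Set.range b)) (h : Disjoint W₁ W₂) :
    Disjoint (span K (W₁ : Set V)) (span K (W₂ : Set V)) := by
  obtain ⟨C, hW₂C, hC⟩ := h.symm.exists_isCompl
  set φ : V →ₗ[k] V := W₁.projection C hC.symm
  set π : V →ₗ[K] V := b.constr K fun i => φ (b i)
  have hπφ : Set.EqOn (π.restrictScalars k) φ (span k (Set.range b)) :=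
    LinearMap.eqOn_span' (by rintro _ ⟨i, rfl⟩; simp [π])
  have hπ₁ : Set.EqOn π LinearMap.id (span K (W₁ : Set V)) :=
    LinearMap.eqOn_span' fun x hx => (hπφ (h₁ hx)).trans (projection_apply_of_mem_left _ hx)
  have hπ₂ : Set.EqOn π 0 (span K (W₂ : Set V)) :=
    LinearMap.eqOn_span' (g := 0) fun x hx =>
      (hπφ (h₂ hx)).trans (projection_apply_of_mem_right _ (hW₂C hx))
  exact disjoint_def.2 fun x hx₁ hx₂ => (hπ₁ hx₁).symm.trans (hπ₂ hx₂)

theorem Module.Basis.codisjoint_span_of_sup_eq_span (h : W₁ ⊔ W₂ = span k (Set.range b)) :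
    Codisjoint (span K (W₁ : Set V)) (span K (W₂ : Set V)) := by
  rw [codisjoint_iff, eq_top_iff, ← b.span_eq, span_le]
  rintro _ ⟨i, rfl⟩
  obtain ⟨y, hy, z, hz, hyz⟩ := mem_sup.1 (h ▸ subset_span (Set.mem_range_self i))
  rw [← hyz]
  exact add_mem (mem_sup_left (subset_span hy)) (mem_sup_right (subset_span hz))

theorem Module.Basis.isCompl_span_of_disjoint_of_sup_eq_span [Algebra k K] [IsScalarTower k K V]
    (hd : Disjoint W₁ W₂) (hs : W₁ ⊔ W₂ = span k (Set.range b)) :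
    IsCompl (span K (W₁ : Set V)) (span K (W₂ : Set V)) :=
  ⟨b.disjoint_span_of_le_span (le_sup_left.trans hs.le) (le_sup_right.trans hs.le) hd,
    b.codisjoint_span_of_sup_eq_span hs⟩

end ExtensionOfScalars

theorem stmt8_general {V : Type*} [AddCommGroup V] [Module ℝ V]
    (L : AddSubgroup V)
    (hL : ∃ b : Module.Basis (Fin (Module.finrank ℝ V)) ℝ V,
      L = AddSubgroup.closure (Set.range ⇑b))
    (H : Subgroup (V ≃ₗ[ℝ] V)) (hfin : Finite H)
    (hHL : ∀ A ∈ H, ⇑A '' (L : Set V) = (L : Set V))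
    (V' : Submodule ℝ V)
    (hV'L : V' = Submodule.span ℝ ((L : Set V) ∩ (V' : Set V)))
    (hV'H : ∀ A ∈ H, Submodule.map A.toLinearMap V' = V') :
    ∃ V'' : Submodule ℝ V,
      V'' = Submodule.span ℝ ((L : Set V) ∩ (V'' : Set V)) ∧
      (∀ A ∈ H, Submodule.map A.toLinearMap V'' = V'') ∧
      IsCompl V' V'' := by
  obtain ⟨b, hLb⟩ := hL
  let _ : Module ℚ V := Module.compHom V (algebraMap ℚ ℝ)
  have : IsScalarTower ℚ ℝ V := IsScalarTower.of_compHom ℚ ℝ V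
  let ρ := H.restrictScalarsRepresentation ℚ
  have hLq : span ℚ (L : Set V) = span ℚ (Set.range b) := by
    rw [hLb, ← span_int_eq_addSubgroupClosure, coe_toAddSubgroup, span_span_of_tower]
  have hAL : ∀ A ∈ H, Set.MapsTo A L L := fun A hA x hx => hHL A hA ▸ Set.mem_image_of_mem A hx
  let Vq : Subrepresentation ρ := ⟨span ℚ (L : Set V), fun A _ hx =>
    span_mono (Set.image_subset_iff.2 (hAL A A.2)) (apply_mem_span_image_of_mem_span (ρ A) hx)⟩
  let W' : Subrepresentation ρ := ⟨V'.restrictScalars ℚ ⊓ Vq.toSubmodule, fun A _ hx =>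
    ⟨hV'H A A.2 ▸ mem_map_of_mem hx.1, Vq.apply_mem_toSubmodule A hx.2⟩⟩
  -- Maschke's theorem over ℚ, through `ComplementedLattice (Subrepresentation ρ)`
  obtain ⟨W₀, hW₀⟩ := exists_isCompl W'
  have hdisj : Disjoint W'.toSubmodule W₀.toSubmodule :=
    disjoint_iff.2 (congrArg Subrepresentation.toSubmodule hW₀.inf_eq_bot)
  have hsup : W'.toSubmodule ⊔ W₀.toSubmodule = ⊤ :=
    congrArg Subrepresentation.toSubmodule hW₀.sup_eq_top
  set W'' : Submodule ℚ V := W₀.toSubmodule ⊓ Vq.toSubmodule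
  have hW'' : W'.toSubmodule ⊔ W'' = span ℚ (Set.range b) := by
    rw [← sup_inf_assoc_of_le _ inf_le_right, hsup, top_inf_eq, ← hLq]
  refine ⟨span ℝ (W'' : Set V), (span_inter_span_eq_of_le_span_rat L inf_le_right).symm,
    map_span_eq_of_mapsTo fun A hA x hx => ?_, ?_⟩
  · exact ⟨W₀.apply_mem_toSubmodule ⟨A, hA⟩ hx.1, Vq.apply_mem_toSubmodule ⟨A, hA⟩ hx.2⟩
  · rw [← span_restrictScalars_inf_span_rat_eq L hV'L]
    exact b.isCompl_span_of_disjoint_of_sup_eq_span (hdisj.mono_right inf_le_left) hW''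

theorem stmt8 {V : Type*} [AddCommGroup V] [Module ℝ V] [FiniteDimensional ℝ V]
    (L : AddSubgroup V)
    (hL : ∃ b : Module.Basis (Fin (Module.finrank ℝ V)) ℝ V,
      L = AddSubgroup.closure (Set.range ⇑b))
    (H : Subgroup (V ≃ₗ[ℝ] V)) (hfin : Finite H)
    (hHL : ∀ A ∈ H, ⇑A '' (L : Set V) = (L : Set V))
    (V' : Submodule ℝ V)
    (hV'L : V' = Submodule.span ℝ ((L : Set V) ∩ (V' : Set V)))
    (hV'H : ∀ A ∈ H, Submodule.map A.toLinearMap V' = V') :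
    ∃ V'' : Submodule ℝ V,
      V'' = Submodule.span ℝ ((L : Set V) ∩ (V'' : Set V)) ∧
      (∀ A ∈ H, Submodule.map A.toLinearMap V'' = V'') ∧
      IsCompl V' V'' :=
  stmt8_general L hL H hfin hHL V' hV'L hV'H
end

section
/- Let L be a lattice in a finite-dimensional real vector space V and V' an L-subspace of V. Then there exists an open subset U' of V containing V', which is a union of cosets of V', such that L ∩ U' = L ∩ V'. -/
/-!
Let `π : V → V ⧸ V'` be the quotient map. Since `L ∩ V'` spans `V'`, it contains a finite spanning
family, and every `v ∈ V'` lies within a fixed distance `C` of its `ℤ`-span. Hence each `π ℓ` with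
`ℓ ∈ L` and `‖π ℓ‖ < 1` is also `π` of a lattice point of norm at most `1 + C`; there are finitely
many of those, so `0` is isolated in `π '' L`, and `U'` is the preimage under `π` of a small ball.
-/

open Metric Submodule

lemma exists_mem_closure_norm_sub_le_sum {ι E : Type*} [Fintype ι] [SeminormedAddCommGroup E]
    [NormedSpace ℝ E] (f : ι → E) {v : E} (hv : v ∈ span ℝ (Set.range f)) :
    ∃ ν ∈ AddSubgroup.closure (Set.range f), ‖v - ν‖ ≤ ∑ i, ‖f i‖ := by
  obtain ⟨c, rfl⟩ := mem_span_range_iff_exists_fun ℝ |>.mp hv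
  refine ⟨∑ i, ⌊c i⌋ • f i, AddSubgroup.sum_mem _ fun i _ ↦
    AddSubgroup.zsmul_mem _ (AddSubgroup.subset_closure (Set.mem_range_self i)) _, ?_⟩
  have hfract : ∑ i, c i • f i - ∑ i, ⌊c i⌋ • f i = ∑ i, Int.fract (c i) • f i := by
    simp only [← Finset.sum_sub_distrib, Int.fract, sub_smul, Int.cast_smul_eq_zsmul]
  rw [hfract]
  refine (norm_sum_le _ _).trans (Finset.sum_le_sum fun i _ ↦ ?_)
  rw [norm_smul, Real.norm_of_nonneg (Int.fract_nonneg _)]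
  exact mul_le_of_le_one_left (norm_nonneg _) (Int.fract_lt_one _).le

lemma exists_pos_inter_ball_subset_singleton {X : Type*} [MetricSpace X] {A : Set X} {x : X}
    {r : ℝ} (hr : 0 < r) (hA : (A ∩ ball x r).Finite) : ∃ ε > 0, A ∩ ball x ε ⊆ {x} := by
  obtain ⟨δ, hδ, hball⟩ := Metric.isOpen_iff.mp (hA.sdiff (t := {x})).isClosed.isOpen_compl x
    (fun h ↦ h.2 rfl)
  refine ⟨min r δ, lt_min hr hδ, fun y ⟨hyA, hy⟩ ↦ ?_⟩
  by_contra hyx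
  exact hball (ball_subset_ball (min_le_right r δ) hy)
    ⟨⟨hyA, ball_subset_ball (min_le_left r δ) hy⟩, hyx⟩

section

variable {V : Type*} [NormedAddCommGroup V] [NormedSpace ℝ V] [FiniteDimensional ℝ V]
  (L : AddSubgroup V) [DiscreteTopology L] (V' : Submodule ℝ V)

lemma AddSubgroup.finite_inter_closedBall_of_discrete (r : ℝ) :
    ((L : Set V) ∩ closedBall 0 r).Finite := by
  rw [Set.inter_comm]
  exact finite_isBounded_inter_isClosed (isDiscrete_iff_discreteTopology.mpr ‹_›)
    isBounded_closedBall AddSubgroup.isClosed_of_discrete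

lemma finite_mkQ_image_inter_ball (hV' : V' ≤ span ℝ ((L : Set V) ∩ V')) :
    (V'.mkQ '' L ∩ ball 0 1).Finite := by
  obtain ⟨f, hfLV', hfspan, -⟩ := exists_fun_fin_finrank_span_eq ℝ ((L : Set V) ∩ V')
  have hclosure : AddSubgroup.closure (Set.range f) ≤ L ⊓ V'.toAddSubgroup :=
    AddSubgroup.closure_le _ |>.mpr <| Set.range_subset_iff.mpr hfLV'
  refine ((L.finite_inter_closedBall_of_discrete (1 + ∑ i, ‖f i‖)).image V'.mkQ).subset ?_
  rintro _ ⟨⟨ℓ, hℓ, rfl⟩, hlt⟩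
  rw [mem_ball_zero_iff] at hlt
  obtain ⟨m, hm, hm_lt⟩ := Submodule.Quotient.norm_mk_lt (V'.mkQ ℓ) (sub_pos.mpr hlt)
  have hv : ℓ - m ∈ V' := (Submodule.Quotient.eq V').mp hm.symm
  obtain ⟨ν, hν, hν_le⟩ := exists_mem_closure_norm_sub_le_sum f (hfspan ▸ hV' hv)
  obtain ⟨hνL, hνV'⟩ := hclosure hν
  refine ⟨ℓ - ν, ⟨L.sub_mem hℓ hνL, ?_⟩, (Submodule.Quotient.eq V').mpr (by simpa using hνV')⟩
  rw [mem_closedBall_zero_iff]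
  calc ‖ℓ - ν‖ = ‖m + (ℓ - m - ν)‖ := by abel_nf
    _ ≤ ‖m‖ + ‖ℓ - m - ν‖ := norm_add_le _ _
    _ ≤ 1 + ∑ i, ‖f i‖ := by gcongr; linarith

lemma exists_pos_mem_of_norm_mkQ_lt (hV' : V' ≤ span ℝ ((L : Set V) ∩ V')) :
    ∃ ε > 0, ∀ ℓ ∈ L, ‖V'.mkQ ℓ‖ < ε → ℓ ∈ V' := by
  have : IsClosed (V' : Set V) := V'.closed_of_finiteDimensional
  obtain ⟨ε, hε, hsub⟩ :=
    exists_pos_inter_ball_subset_singleton one_pos (finite_mkQ_image_inter_ball L V' hV')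
  refine ⟨ε, hε, fun ℓ hℓ hlt ↦ ?_⟩
  have hzero : V'.mkQ ℓ = 0 := hsub ⟨⟨ℓ, hℓ, rfl⟩, mem_ball_zero_iff.mpr hlt⟩
  simpa using hzero

end

theorem stmt11 {V : Type*} [NormedAddCommGroup V] [NormedSpace ℝ V] [FiniteDimensional ℝ V]
    (L : AddSubgroup V)
    (hL : ∃ b : Module.Basis (Fin (Module.finrank ℝ V)) ℝ V,
      L = AddSubgroup.closure (Set.range ⇑b))
    (V' : Submodule ℝ V)
    (hV' : V' = Submodule.span ℝ ((L : Set V) ∩ (V' : Set V))) :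
    ∃ U' : Set V, IsOpen U' ∧ (V' : Set V) ⊆ U' ∧
      (∀ x ∈ U', ∀ v ∈ V', x + v ∈ U') ∧
      (L : Set V) ∩ U' = (L : Set V) ∩ (V' : Set V) := by
  obtain ⟨b, rfl⟩ := hL
  have : DiscreteTopology (AddSubgroup.closure (Set.range b)) := by
    rw [← span_int_eq_addSubgroupClosure]
    infer_instance
  obtain ⟨ε, hε, hmem⟩ := exists_pos_mem_of_norm_mkQ_lt _ V' hV'.le
  refine ⟨V'.mkQ ⁻¹' ball 0 ε, isOpen_ball.preimage V'.mkQ.continuous_of_finiteDimensional,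
    fun v hv ↦ ?_, fun x hx v hv ↦ ?_, ?_⟩
  · simpa [(Submodule.Quotient.mk_eq_zero V').mpr hv] using hε
  · simpa [(Submodule.Quotient.mk_eq_zero V').mpr hv] using hx
  · ext ℓ
    refine ⟨fun ⟨hℓ, hlt⟩ ↦ ⟨hℓ, hmem ℓ hℓ (mem_ball_zero_iff.mp hlt)⟩, fun ⟨hℓ, hv⟩ ↦ ⟨hℓ, ?_⟩⟩
    simpa [(Submodule.Quotient.mk_eq_zero V').mpr hv] using hε
end

section
/- Let L be a lattice in a finite-dimensional real vector space V, and let W = span_ℚ(L) be the rational span of L in V. The map sending an L-subspace V' of V to W ∩ V' is a bijection from the set of L-subspaces of V onto the set of ℚ-linear subspaces of W, with inverse given by taking the real span; moreover dim_ℝ V' = dim_ℚ (W ∩ V'). -/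
/-!
The rational span `W` of the lattice is a `ℚ`-form of `V`: it spans `V` over `ℝ` and
`dim_ℚ W = dim_ℝ V`. For a `ℚ`-form, taking a `ℚ`-complement `W''` of `W' ≤ W` inside `W` gives
`dim_ℝ V ≤ dim_ℝ ⟨W'⟩_ℝ + dim_ℝ ⟨W''⟩_ℝ ≤ dim_ℚ W' + dim_ℚ W'' = dim_ℚ W`, so equality holds
throughout and `dim_ℝ ⟨W'⟩_ℝ = dim_ℚ W'`. Applied to `W' ≤ W ∩ ⟨W'⟩_ℝ`, which have the same real
span, this gives `W ∩ ⟨W'⟩_ℝ = W'`. Conversely every `w ∈ W` has a nonzero multiple in `L`, so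
`⟨W'⟩_ℝ` is spanned by the lattice points it contains, and an `L`-subspace `V'` is the real span
of `W ∩ V'` because it is already spanned by `L ∩ V' ⊆ W ∩ V'`.
-/

open Module Submodule

namespace Submodule

variable {K F V : Type*} [Field K] [Field F] [Algebra K F] [AddCommGroup V] [Module K V]
  [Module F V] [IsScalarTower K F V]

theorem finrank_span_le_finrank (U : Submodule K V) [FiniteDimensional K U] :
    finrank F (span F (U : Set V)) ≤ finrank K U := by
  let c := finBasis K U
  have hc : span K (Set.range (U.subtype ∘ c)) = U := by
    rw [Set.range_comp, span_image, c.span_eq, map_subtype_top]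
  calc finrank F (span F (U : Set V))
      = finrank F (span F (Set.range (U.subtype ∘ c))) := by
        rw [← span_span_of_tower K F (Set.range (U.subtype ∘ c)), hc]
    _ ≤ Fintype.card (Fin (finrank K U)) := finrank_range_le_card _
    _ = finrank K U := Fintype.card_fin _

theorem span_sup_span (U₁ U₂ : Submodule K V) :
    span F ((U₁ ⊔ U₂ : Submodule K V) : Set V) = span F (U₁ : Set V) ⊔ span F (U₂ : Set V) := by
  rw [← span_union, ← span_span_of_tower K F ((U₁ : Set V) ∪ U₂), span_union, span_eq, span_eq]

theorem span_inf_restrictScalars_eq {s : Set V} {W : Submodule K V} (hs : s ⊆ W)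
    {V' : Submodule F V} (hV' : V' = span F (s ∩ V')) :
    span F ((W ⊓ V'.restrictScalars K : Submodule K V) : Set V) = V' :=
  le_antisymm (span_le.2 fun _ hx => hx.2)
    (hV'.le.trans (span_mono fun _ hx => ⟨hs hx.1, hx.2⟩))

variable (F) in
/-- `W` is a `K`-form of the `F`-vector space `V`, i.e. `F ⊗[K] W ≅ V` via the inclusion. -/
structure IsForm (W : Submodule K V) : Prop where
  span_eq_top : span F (W : Set V) = ⊤
  finrank_eq : finrank K W = finrank F V

theorem isForm_span_range_basis {ι : Type*} [Fintype ι] (b : Basis ι F V) :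
    (span K (Set.range b)).IsForm F := by
  have := FiniteDimensional.span_of_finite K (Set.finite_range b)
  have hspan : span F (span K (Set.range b) : Set V) = ⊤ := by
    rw [span_span_of_tower, b.span_eq]
  refine ⟨hspan, le_antisymm ?_ ?_⟩
  · exact (finrank_range_le_card _).trans (finrank_eq_card_basis b).ge
  · rw [← finrank_top F V, ← hspan]
    exact finrank_span_le_finrank _

namespace IsForm

variable {W W' : Submodule K V} [FiniteDimensional F V] [FiniteDimensional K W]

theorem finrank_span_eq (hW : W.IsForm F) (hW' : W' ≤ W) :
    finrank F (span F (W' : Set V)) = finrank K W' := by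
  have : FiniteDimensional K W' := finiteDimensional_of_le hW'
  obtain ⟨C, hC⟩ := W'.exists_isCompl
  set W'' := C ⊓ W
  have : FiniteDimensional K W'' := finiteDimensional_of_le inf_le_right
  have hsup : W' ⊔ W'' = W := by
    rw [← sup_inf_assoc_of_le C hW', hC.sup_eq_top, top_inf_eq]
  have hinf : W' ⊓ W'' = ⊥ := (hC.disjoint.mono_right inf_le_left).eq_bot
  have hdim : finrank K W' + finrank K W'' = finrank F V := by
    rw [← hW.finrank_eq, ← hsup, ← finrank_sup_add_finrank_inf_eq, hinf, finrank_bot, add_zero]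
  have hspan :
      finrank F V ≤ finrank F (span F (W' : Set V)) + finrank F (span F (W'' : Set V)) := by
    rw [← finrank_top F V, ← hW.span_eq_top, ← hsup, span_sup_span]
    exact finrank_add_le_finrank_add_finrank _ _
  have h' := finrank_span_le_finrank (F := F) W'
  have h'' := finrank_span_le_finrank (F := F) W''
  omega

theorem inf_span_eq (hW : W.IsForm F) (hW' : W' ≤ W) :
    W ⊓ (span F (W' : Set V)).restrictScalars K = W' := by
  set U := W ⊓ (span F (W' : Set V)).restrictScalars K
  have hle : W' ≤ U := le_inf hW' (span_le_restrictScalars K F _ |>.trans' subset_span)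
  have hspan : span F (U : Set V) = span F (W' : Set V) :=
    le_antisymm (span_le.2 fun _ hx => hx.2) (span_mono hle)
  have : FiniteDimensional K U := finiteDimensional_of_le inf_le_left
  refine (eq_of_le_of_finrank_eq hle ?_).symm
  rw [← hW.finrank_span_eq hW', ← hW.finrank_span_eq inf_le_left, hspan]

end IsForm

theorem span_addSubgroupClosure {R : Type*} [Ring R] [Module R V] (s : Set V) :
    span R (AddSubgroup.closure s : Set V) = span R s := by
  rw [← span_int_eq_addSubgroupClosure, coe_toAddSubgroup]
  exact span_span_of_tower ℤ R s

end Submodule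

namespace AddSubgroup

variable {V : Type*} [AddCommGroup V] [Module ℚ V]

theorem exists_nsmul_mem_of_mem_span_rat (L : AddSubgroup V) {x : V}
    (hx : x ∈ span ℚ (L : Set V)) : ∃ n : ℕ, n ≠ 0 ∧ n • x ∈ L := by
  induction hx using span_induction with
  | mem x hx => exact ⟨1, one_ne_zero, by rwa [one_nsmul]⟩
  | zero => exact ⟨1, one_ne_zero, by simp⟩
  | add x y _ _ hx hy =>
    obtain ⟨m, hm, hmx⟩ := hx
    obtain ⟨n, hn, hny⟩ := hy
    refine ⟨m * n, mul_ne_zero hm hn, ?_⟩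
    rw [smul_add, mul_nsmul, mul_nsmul']
    exact L.add_mem (L.nsmul_mem hmx n) (L.nsmul_mem hny m)
  | smul q x _ hx =>
    obtain ⟨n, hn, hnx⟩ := hx
    refine ⟨q.den * n, mul_ne_zero q.den_nz hn, ?_⟩
    have : (q.den * n) • q • x = q.num • n • x := by
      rw [← Nat.cast_smul_eq_nsmul ℚ, ← Nat.cast_smul_eq_nsmul ℚ n, ← Int.cast_smul_eq_zsmul ℚ,
        smul_smul, smul_smul, ← Rat.mul_den_eq_num q]
      push_cast
      ring_nf
    rw [this]
    exact L.zsmul_mem hnx q.num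

theorem span_inter_span_eq {F : Type*} [Field F] [CharZero F] [Module F V] (L : AddSubgroup V)
    {W' : Submodule ℚ V} (hW' : W' ≤ span ℚ (L : Set V)) :
    span F ((L : Set V) ∩ span F (W' : Set V)) = span F (W' : Set V) := by
  refine le_antisymm (span_le.2 fun _ hx => hx.2) (span_le.2 fun w hw => ?_)
  obtain ⟨n, hn, hnw⟩ := L.exists_nsmul_mem_of_mem_span_rat (hW' hw)
  have hmem : n • w ∈ span F ((L : Set V) ∩ span F (W' : Set V)) :=
    subset_span ⟨hnw, (span F _).nsmul_mem (subset_span hw) n⟩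
  rw [← inv_smul_smul₀ (Nat.cast_ne_zero.2 hn : (n : F) ≠ 0) w, Nat.cast_smul_eq_nsmul F]
  exact smul_mem _ _ hmem

end AddSubgroup

theorem stmt12 {V : Type*} [AddCommGroup V] [Module ℝ V] [FiniteDimensional ℝ V]
    [Module ℚ V] [IsScalarTower ℚ ℝ V]
    (L : AddSubgroup V)
    (hL : ∃ b : Module.Basis (Fin (Module.finrank ℝ V)) ℝ V,
      L = AddSubgroup.closure (Set.range ⇑b))
    (W : Submodule ℚ V) (hW : W = Submodule.span ℚ (L : Set V)) :
    ∃ e : {V' : Submodule ℝ V // V' = Submodule.span ℝ ((L : Set V) ∩ (V' : Set V))} ≃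
          {W' : Submodule ℚ V // W' ≤ W},
      (∀ V', (e V').1 = W ⊓ V'.1.restrictScalars ℚ) ∧
      (∀ W', (e.symm W').1 = Submodule.span ℝ (W'.1 : Set V)) ∧
      (∀ V', Module.finrank ℝ V'.1 = Module.finrank ℚ (e V').1) := by
  obtain ⟨b, hb⟩ := hL
  have hWb : W = span ℚ (Set.range b) := by rw [hW, hb, span_addSubgroupClosure]
  have : FiniteDimensional ℚ W := hWb ▸ FiniteDimensional.span_of_finite ℚ (Set.finite_range b)
  have hform : W.IsForm ℝ := hWb ▸ isForm_span_range_basis b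
  have hLW : (L : Set V) ⊆ W := hW ▸ subset_span
  refine ⟨{ toFun := fun V' => ⟨W ⊓ V'.1.restrictScalars ℚ, inf_le_left⟩
            invFun := fun W' => ⟨span ℝ W'.1, (L.span_inter_span_eq (hW ▸ W'.2)).symm⟩
            left_inv := fun V' => Subtype.ext (span_inf_restrictScalars_eq hLW V'.2)
            right_inv := fun W' => Subtype.ext (hform.inf_span_eq W'.2) },
    fun _ => rfl, fun _ => rfl, fun V' => ?_⟩
  change finrank ℝ V'.1 = finrank ℚ (W ⊓ V'.1.restrictScalars ℚ : Submodule ℚ V)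
  rw [← hform.finrank_span_eq inf_le_left, span_inf_restrictScalars_eq hLW V'.2]
end
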